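/- Let N ≥ 4 be an integer, α ∈ (0,1), and suppose the real sequences x_0,…,x_{N−3} and y_0,…,y_{N−2} solve the absorption system. Then y_0 = (α(N−2)(N+1) + 2)/(2(1−α)) and y_{N−2} = N(N−1)/(2(1−α)). -/
import Mathlib


/-- The sequences `x_0,…,x_{N−3}` and `y_0,…,y_{N−2}` solve the absorption
(expected-hitting-time) system with `ρ = (1−α)/2`:
(i) `y_0 − α·y_{N−2} = 1`;
(ii) `x_k − (1−ρ)·y_k − ρ·x_{N−k−3} = 1 + kρ` for `0 ≤ k ≤ N−3`;
(iii) `y_k − ρ·y_{k−1} − (1−ρ)·x_{N−k−2} = k − (k−1)ρ` for `1 ≤ k ≤ N−2`. -/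
def solvesAbsorption (N : ℕ) (α : ℝ) (x y : ℕ → ℝ) : Prop :=
  y 0 - α * y (N - 2) = 1 ∧
  (∀ k : ℕ, k ≤ N - 3 →
    x k - (1 - (1 - α) / 2) * y k - (1 - α) / 2 * x (N - k - 3) =
      1 + (k : ℝ) * ((1 - α) / 2)) ∧
  (∀ k : ℕ, 1 ≤ k → k ≤ N - 2 →
    y k - (1 - α) / 2 * y (k - 1) - (1 - (1 - α) / 2) * x (N - k - 2) =
      (k : ℝ) - ((k : ℝ) - 1) * ((1 - α) / 2))

lemma gauss_sum_real (n : ℕ) : ∑ k ∈ Finset.range n, (k : ℝ) = n * (n - 1) / 2 := by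
  induction n with
  | zero => simp
  | succ n ih => rw [Finset.sum_range_succ, ih]; push_cast; ring

/-- The boundary values of the absorption system:
`y_0 = (α(N−2)(N+1) + 2)/(2(1−α))` and `y_{N−2} = N(N−1)/(2(1−α))`. -/
theorem stmt17 (N : ℕ) (hN : 4 ≤ N) (α : ℝ) (hα : α ∈ Set.Ioo (0 : ℝ) 1)
    (x y : ℕ → ℝ) (h : solvesAbsorption N α x y) :
    y 0 = (α * ((N : ℝ) - 2) * ((N : ℝ) + 1) + 2) / (2 * (1 - α)) ∧
    y (N - 2) = (N : ℝ) * ((N : ℝ) - 1) / (2 * (1 - α)) := by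
  obtain ⟨h1, h2, h3⟩ := h
  have hα1 : (1 : ℝ) - α ≠ 0 := by have := hα.2; intro hc; linarith
  -- sum of equation (ii)
  have A : ∑ k ∈ Finset.range (N - 2),
      (x k - (1 - (1 - α) / 2) * y k - (1 - α) / 2 * x (N - k - 3)) =
      ∑ k ∈ Finset.range (N - 2), (1 + (k : ℝ) * ((1 - α) / 2)) :=
    Finset.sum_congr rfl fun k hk =>
      h2 k (by have := Finset.mem_range.mp hk; omega)
  -- sum of equation (iii), reindexed
  have B : ∑ j ∈ Finset.range (N - 2),
      (y (j + 1) - (1 - α) / 2 * y (j + 1 - 1) -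
        (1 - (1 - α) / 2) * x (N - (j + 1) - 2)) =
      ∑ j ∈ Finset.range (N - 2),
        (((j + 1 : ℕ) : ℝ) - (((j + 1 : ℕ) : ℝ) - 1) * ((1 - α) / 2)) :=
    Finset.sum_congr rfl fun j hj =>
      h3 (j + 1) (by omega) (by have := Finset.mem_range.mp hj; omega)
  -- reflection identities
  have hrefl : ∑ k ∈ Finset.range (N - 2), x (N - k - 3) =
      ∑ k ∈ Finset.range (N - 2), x k := by
    calc ∑ k ∈ Finset.range (N - 2), x (N - k - 3)
        = ∑ k ∈ Finset.range (N - 2), x (N - 2 - 1 - k) :=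
          Finset.sum_congr rfl fun k _ => by congr 1; omega
      _ = ∑ k ∈ Finset.range (N - 2), x k := Finset.sum_range_reflect _ _
  have hrefl' : ∑ j ∈ Finset.range (N - 2), x (N - (j + 1) - 2) =
      ∑ k ∈ Finset.range (N - 2), x k := by
    calc ∑ j ∈ Finset.range (N - 2), x (N - (j + 1) - 2)
        = ∑ j ∈ Finset.range (N - 2), x (N - 2 - 1 - j) :=
          Finset.sum_congr rfl fun j _ => by congr 1; omega
      _ = ∑ k ∈ Finset.range (N - 2), x k := Finset.sum_range_reflect _ _
  set X := ∑ k ∈ Finset.range (N - 2), x k with hX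
  set S := ∑ k ∈ Finset.range (N - 1), y k with hS
  have hS1 : ∑ k ∈ Finset.range (N - 2), y k = S - y (N - 2) := by
    have : S = ∑ k ∈ Finset.range (N - 2), y k + y (N - 2) := by
      rw [hS, show N - 1 = (N - 2) + 1 by omega, Finset.sum_range_succ]
    linarith
  have hS2 : ∑ j ∈ Finset.range (N - 2), y (j + 1) = S - y 0 := by
    have : S = ∑ j ∈ Finset.range (N - 2), y (j + 1) + y 0 := by
      rw [hS, show N - 1 = (N - 2) + 1 by omega, Finset.sum_range_succ']
    linarith
  -- expand A
  have hA : X - (1 - (1 - α) / 2) * (S - y (N - 2)) - (1 - α) / 2 * X =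
      (N - 2 : ℝ) + ((N - 2 : ℝ) * ((N - 2 : ℝ) - 1) / 2) * ((1 - α) / 2) := by
    have lhs : ∑ k ∈ Finset.range (N - 2),
        (x k - (1 - (1 - α) / 2) * y k - (1 - α) / 2 * x (N - k - 3)) =
        X - (1 - (1 - α) / 2) * (S - y (N - 2)) - (1 - α) / 2 * X := by
      rw [Finset.sum_sub_distrib, Finset.sum_sub_distrib, ← Finset.mul_sum,
        ← Finset.mul_sum, hrefl, hS1, ← hX]
    have rhs : ∑ k ∈ Finset.range (N - 2), (1 + (k : ℝ) * ((1 - α) / 2)) =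
        (N - 2 : ℝ) + ((N - 2 : ℝ) * ((N - 2 : ℝ) - 1) / 2) * ((1 - α) / 2) := by
      rw [Finset.sum_add_distrib, Finset.sum_const, ← Finset.sum_mul,
        gauss_sum_real, Finset.card_range]
      have h2N : (2 : ℕ) ≤ N := by omega
      simp only [nsmul_eq_mul, Nat.cast_sub h2N]
      push_cast
      ring
    rw [lhs, rhs] at A; exact A
  -- expand B
  have hB : (S - y 0) - (1 - α) / 2 * (S - y (N - 2)) - (1 - (1 - α) / 2) * X =
      ((N - 2 : ℝ) * ((N - 2 : ℝ) - 1) / 2 + (N - 2 : ℝ)) -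
        ((N - 2 : ℝ) * ((N - 2 : ℝ) - 1) / 2) * ((1 - α) / 2) := by
    have lhs : ∑ j ∈ Finset.range (N - 2),
        (y (j + 1) - (1 - α) / 2 * y (j + 1 - 1) -
          (1 - (1 - α) / 2) * x (N - (j + 1) - 2)) =
        (S - y 0) - (1 - α) / 2 * (S - y (N - 2)) - (1 - (1 - α) / 2) * X := by
      simp only [Nat.add_sub_cancel]
      rw [Finset.sum_sub_distrib, Finset.sum_sub_distrib, ← Finset.mul_sum,
        ← Finset.mul_sum, hrefl', hS1, hS2]
    have rhs : ∑ j ∈ Finset.range (N - 2),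
        (((j + 1 : ℕ) : ℝ) - (((j + 1 : ℕ) : ℝ) - 1) * ((1 - α) / 2)) =
        ((N - 2 : ℝ) * ((N - 2 : ℝ) - 1) / 2 + (N - 2 : ℝ)) -
          ((N - 2 : ℝ) * ((N - 2 : ℝ) - 1) / 2) * ((1 - α) / 2) := by
      have : ∀ j : ℕ, ((j + 1 : ℕ) : ℝ) - (((j + 1 : ℕ) : ℝ) - 1) * ((1 - α) / 2)
          = ((j : ℝ) + 1) - (j : ℝ) * ((1 - α) / 2) := by
        intro j; push_cast; ring
      simp only [this]
      rw [Finset.sum_sub_distrib, Finset.sum_add_distrib, Finset.sum_const,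
        ← Finset.sum_mul, gauss_sum_real, Finset.card_range]
      have h2N : (2 : ℕ) ≤ N := by omega
      simp only [nsmul_eq_mul, Nat.cast_sub h2N]
      push_cast
      ring
    rw [lhs, rhs] at B; exact B
  -- key identity
  have key : y (N - 2) - y 0 = ((N : ℝ) - 2) * ((N : ℝ) + 1) / 2 := by
    linear_combination hA + hB
  have hne : 2 * (1 - α) ≠ 0 := by
    intro hc; apply hα1; linarith [hα.2]
  have hyN : y (N - 2) = (N : ℝ) * ((N : ℝ) - 1) / (2 * (1 - α)) := by
    rw [eq_div_iff hne]
    linear_combination 2 * key + 2 * h1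
  refine ⟨?_, hyN⟩
  rw [eq_div_iff hne]
  linear_combination 2 * h1 + 2 * α * key
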